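/- Let γ > 0, let Φ satisfy the standing potential assumptions for γ, and let S ⊆ L²(ℝ) be a cone (closed under multiplication by nonnegative scalars) that is invariant under ∂P, i.e. W ∈ S implies Ā(Φ′ ∘ (ĀW)) ∈ S. If W* ∈ S ∩ B_γ maximises P over S ∩ B_γ and P(W*) > 0, then (1/2)‖W*‖₂² = γ and W* is a travelling wave: σ²W* = Ā(Φ′ ∘ (ĀW*)) almost everywhere, with σ² = ‖Ā(Φ′ ∘ (ĀW*))‖₂/√(2γ) > 0. -/

import Mathlib

/-!
`Φ` is convex on `[-√(2γ), √(2γ)]`, an interval containing `ĀW` for every `W ∈ B_γ`, and `Ā` is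
self-adjoint on `L²`; so the tangent inequality of `Φ` integrates to
`P(W*) + ⟨∂P(W*), V - W*⟩ ≤ P(V)` for all `V ∈ B_γ`. With `V = 0` this gives
`0 < P(W*) ≤ ⟨∂P(W*), W*⟩`. With the cone element `V = √(2γ) ∂P(W*) / ‖∂P(W*)‖ ∈ S ∩ B_γ`,
maximality of `W*` gives `√(2γ) ‖∂P(W*)‖ ≤ ⟨∂P(W*), W*⟩ ≤ ‖∂P(W*)‖ ‖W*‖ ≤ ‖∂P(W*)‖ √(2γ)`,
so equality holds in Cauchy–Schwarz: `‖W*‖ = √(2γ)` and `W*` is a positive multiple of `∂P(W*)`.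
-/

open MeasureTheory Real Filter

/-- Averaging operator `(Ā W)(φ) = ∫_{φ-1/2}^{φ+1/2} W(ψ) dψ`. -/
noncomputable def avg (W : ℝ → ℝ) (φ : ℝ) : ℝ := ∫ ψ in (φ - 1/2)..(φ + 1/2), W ψ

/-- `Φ'`, the derivative of the potential, taken within the relevant interval. -/
noncomputable def Phi' (Φ : ℝ → ℝ) (γ : ℝ) : ℝ → ℝ :=
  fun r => derivWithin Φ (Set.Icc (-Real.sqrt (2*γ)) (Real.sqrt (2*γ))) r

/-- `Φ''`, the second derivative of the potential, taken within the relevant interval. -/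
noncomputable def Phi'' (Φ : ℝ → ℝ) (γ : ℝ) : ℝ → ℝ :=
  fun r => iteratedDerivWithin 2 Φ (Set.Icc (-Real.sqrt (2*γ)) (Real.sqrt (2*γ))) r

/-- Standing assumptions on the potential `Φ` for parameter `γ`:
`Φ` is `C²` on `[-√(2γ), √(2γ)]`, convex there (`Φ'' ≥ 0`), normalised
(`Φ(0) = Φ'(0) = 0`), and does not vanish identically on this interval. -/
def StandingAssumptions (Φ : ℝ → ℝ) (γ : ℝ) : Prop :=
  ContDiffOn ℝ 2 Φ (Set.Icc (-Real.sqrt (2*γ)) (Real.sqrt (2*γ))) ∧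
  (∀ r ∈ Set.Icc (-Real.sqrt (2*γ)) (Real.sqrt (2*γ)), 0 ≤ Phi'' Φ γ r) ∧
  Φ 0 = 0 ∧ Phi' Φ γ 0 = 0 ∧
  ∃ r ∈ Set.Icc (-Real.sqrt (2*γ)) (Real.sqrt (2*γ)), Φ r ≠ 0

/-- `β = Φ''(0)`. -/
noncomputable def betaOf (Φ : ℝ → ℝ) (γ : ℝ) : ℝ := Phi'' Φ γ 0

/-- Potential energy functional `P(W) = ∫_ℝ Φ((ĀW)(φ)) dφ`. -/
noncomputable def PE (Φ : ℝ → ℝ) (W : ℝ → ℝ) : ℝ := ∫ φ : ℝ, Φ (avg W φ)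

/-- Gâteaux derivative `∂P(W) = Ā(Φ' ∘ (ĀW))`. -/
noncomputable def dPE (Φ : ℝ → ℝ) (γ : ℝ) (W : ℝ → ℝ) : ℝ → ℝ :=
  avg (fun ψ => Phi' Φ γ (avg W ψ))

/-- Membership in the ball `B_γ = {W ∈ L²(ℝ) : (1/2)‖W‖₂² ≤ γ}`. -/
def memB (γ : ℝ) (W : ℝ → ℝ) : Prop :=
  MemLp W 2 volume ∧ (∫ φ : ℝ, (W φ)^2) ≤ 2*γ

open Set

section InnerProductSpace
variable {E : Type*} [NormedAddCommGroup E] [InnerProductSpace ℝ E]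

theorem norm_eq_and_norm_smul_eq_of_mul_norm_le_inner {d w : E} {R : ℝ} (hw : ‖w‖ ≤ R)
    (hpos : 0 < inner ℝ d w) (h : R * ‖d‖ ≤ inner ℝ d w) :
    ‖w‖ = R ∧ 0 < ‖d‖ ∧ ‖d‖ • w = R • d := by
  have hcs := real_inner_le_norm d w
  have hd : 0 < ‖d‖ := (norm_nonneg d).lt_of_ne fun h0 => by
    rw [← h0, zero_mul] at hcs; linarith
  have hwR : ‖w‖ = R := le_antisymm hw (le_of_mul_le_mul_left (by linarith) hd)
  refine ⟨hwR, hd, ?_⟩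
  rw [← hwR]
  exact (inner_eq_norm_mul_iff_real.1 (le_antisymm hcs (by rw [hwR]; linarith))).symm

end InnerProductSpace

section L2
variable {α : Type*} [MeasurableSpace α] {μ : Measure α} {f g : α → ℝ}

theorem MeasureTheory.MemLp.integral_mul_eq_inner_toLp (hf : MemLp f 2 μ) (hg : MemLp g 2 μ) :
    ∫ x, f x * g x ∂μ = inner ℝ (hf.toLp f) (hg.toLp g) := by
  rw [L2.inner_def]
  refine integral_congr_ae ?_
  filter_upwards [hf.coeFn_toLp, hg.coeFn_toLp] with x hfx hgx
  simp [hfx, hgx, mul_comm]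

theorem MeasureTheory.MemLp.norm_toLp_two (hf : MemLp f 2 μ) :
    ‖hf.toLp f‖ = √(∫ x, f x ^ 2 ∂μ) := by
  rw [← Real.sqrt_sq (norm_nonneg _), ← real_inner_self_eq_norm_sq,
    ← hf.integral_mul_eq_inner_toLp hf]
  simp only [sq]

theorem ae_mul_eq_of_mul_sqrt_le_integral_mul (hf : MemLp f 2 μ) (hg : MemLp g 2 μ) {R : ℝ}
    (hgR : √(∫ x, g x ^ 2 ∂μ) ≤ R) (hpos : 0 < ∫ x, f x * g x ∂μ)
    (h : R * √(∫ x, f x ^ 2 ∂μ) ≤ ∫ x, f x * g x ∂μ) :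
    √(∫ x, g x ^ 2 ∂μ) = R ∧ 0 < √(∫ x, f x ^ 2 ∂μ) ∧
      ∀ᵐ x ∂μ, √(∫ x, f x ^ 2 ∂μ) * g x = R * f x := by
  rw [← hg.norm_toLp_two] at hgR ⊢
  rw [← hf.norm_toLp_two] at h ⊢
  rw [hf.integral_mul_eq_inner_toLp hg] at h hpos
  obtain ⟨hgR, hfpos, hsmul⟩ := norm_eq_and_norm_smul_eq_of_mul_norm_le_inner hgR hpos h
  refine ⟨hgR, hfpos, ?_⟩
  have := (Lp.coeFn_smul ‖hf.toLp f‖ (hg.toLp g)).symm.trans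
    ((congrArg (⇑) hsmul).eventuallyEq.trans (Lp.coeFn_smul R (hf.toLp f)))
  filter_upwards [this, hf.coeFn_toLp, hg.coeFn_toLp] with x hx hfx hgx
  simpa [hfx, hgx] using hx

theorem integral_sq_div_sqrt_integral_sq_mul_le (f : α → ℝ) (R : ℝ) :
    ∫ x, (R / √(∫ y, f y ^ 2 ∂μ) * f x) ^ 2 ∂μ ≤ R ^ 2 := by
  set N := √(∫ y, f y ^ 2 ∂μ)
  have hN : N ^ 2 = ∫ y, f y ^ 2 ∂μ := Real.sq_sqrt (integral_nonneg fun y => sq_nonneg _)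
  simp only [mul_pow]
  rw [integral_const_mul, ← hN, ← mul_pow]
  rcases eq_or_ne N 0 with h | h
  · simp [h, sq_nonneg]
  · rw [div_mul_cancel₀ _ h]

theorem integral_mul_div_sqrt_integral_sq_mul (f : α → ℝ) (R : ℝ) :
    ∫ x, f x * (R / √(∫ y, f y ^ 2 ∂μ) * f x) ∂μ = R * √(∫ y, f y ^ 2 ∂μ) := by
  set N := √(∫ y, f y ^ 2 ∂μ)
  have hN : N ^ 2 = ∫ y, f y ^ 2 ∂μ := Real.sq_sqrt (integral_nonneg fun y => sq_nonneg _)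
  calc ∫ x, f x * (R / N * f x) ∂μ = R / N * N ^ 2 := by
        rw [hN, ← integral_const_mul]
        exact integral_congr_ae (ae_of_all _ fun x => by ring)
    _ = R * N := by rcases eq_or_ne N 0 with h | h <;> field_simp [h]

end L2

theorem ConvexOn.add_derivWithin_mul_sub_le {S : Set ℝ} {f : ℝ → ℝ} (hf : ConvexOn ℝ S f)
    {x y : ℝ} (hx : x ∈ S) (hy : y ∈ S) (hfx : DifferentiableWithinAt ℝ f S x) :
    f x + derivWithin f S x * (y - x) ≤ f y := by
  rcases lt_trichotomy x y with hxy | rfl | hxy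
  · have := hf.derivWithin_le_slope hx hy hxy hfx
    rw [slope_def_field, le_div_iff₀ (sub_pos.2 hxy)] at this
    linarith
  · simp
  · have := hf.slope_le_derivWithin hy hx hxy hfx
    rw [slope_def_field, div_le_iff₀ (sub_pos.2 hxy)] at this
    linarith

theorem convexOn_Icc_of_iteratedDerivWithin_two_nonneg {f : ℝ → ℝ} {a b : ℝ} (hab : a < b)
    (hf : ContDiffOn ℝ 2 f (Icc a b))
    (hf'' : ∀ x ∈ Icc a b, 0 ≤ iteratedDerivWithin 2 f (Icc a b) x) :
    ConvexOn ℝ (Icc a b) f := by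
  have hf' : DifferentiableOn ℝ (derivWithin f (Icc a b)) (Icc a b) :=
    (hf.derivWithin (uniqueDiffOn_Icc hab) (m := 1) le_rfl).differentiableOn one_ne_zero
  refine convexOn_of_hasDerivWithinAt2_nonneg (convex_Icc a b) hf.continuousOn
    (f' := derivWithin f (Icc a b)) (f'' := iteratedDerivWithin 2 f (Icc a b))
    (fun x hx => ?_) (fun x hx => ?_) (fun x hx => hf'' x (interior_subset hx))
  · exact (hf.differentiableOn (by norm_num) x (interior_subset hx)).hasDerivWithinAt.mono
      interior_subset
  · rw [iteratedDerivWithin_succ, iteratedDerivWithin_one]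
    exact (hf' x (interior_subset hx)).hasDerivWithinAt.mono interior_subset

theorem avg_eq_setIntegral (W : ℝ → ℝ) (φ : ℝ) :
    avg W φ = ∫ ψ in Ioc (φ - 1/2) (φ + 1/2), W ψ :=
  intervalIntegral.integral_of_le (by linarith)

theorem continuous_avg {W : ℝ → ℝ} (hW : LocallyIntegrable W) : Continuous (avg W) := by
  have hii : ∀ a b, IntervalIntegrable W volume a b := fun a b =>
    (hW.integrableOn_isCompact isCompact_uIcc).intervalIntegrable
  have hprim := intervalIntegral.continuous_primitive hii 0
  have : avg W = fun φ => (∫ ψ in (0:ℝ)..(φ + 1/2), W ψ) - ∫ ψ in (0:ℝ)..(φ - 1/2), W ψ := by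
    funext φ
    exact (intervalIntegral.integral_interval_sub_left (hii _ _) (hii _ _)).symm
  rw [this]
  exact (hprim.comp (continuous_add_const _)).sub (hprim.comp (continuous_sub_right _))

theorem sq_avg_le_avg_sq {W : ℝ → ℝ} (hW : MemLp W 2) (φ : ℝ) :
    avg W φ ^ 2 ≤ avg (fun ψ => W ψ ^ 2) φ := by
  have : IsProbabilityMeasure (volume.restrict (Ioc (φ - 1/2) (φ + 1/2))) :=
    ⟨by simp [Real.volume_Ioc]; norm_num⟩
  simp only [avg_eq_setIntegral]
  exact (Even.convexOn_pow even_two).map_integral_le (continuous_pow 2).continuousOn isClosed_univ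
    (ae_of_all _ fun _ => mem_univ _) ((hW.restrict _).integrable one_le_two)
    hW.integrable_sq.restrict

theorem abs_avg_le_sqrt_integral_sq {W : ℝ → ℝ} (hW : MemLp W 2) (φ : ℝ) :
    |avg W φ| ≤ √(∫ ψ, W ψ ^ 2) := by
  rw [← Real.sqrt_sq_eq_abs]
  refine Real.sqrt_le_sqrt ((sq_avg_le_avg_sq hW φ).trans ?_)
  rw [avg_eq_setIntegral]
  exact setIntegral_le_integral hW.integrable_sq (ae_of_all _ fun _ => sq_nonneg _)

def avgStrip : Set (ℝ × ℝ) := {p | p.2 ∈ Ioc (p.1 - 1/2) (p.1 + 1/2)}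

theorem measurableSet_avgStrip : MeasurableSet avgStrip :=
  (measurableSet_lt (measurable_fst.sub_const _) measurable_snd).inter
    (measurableSet_le measurable_snd (measurable_fst.add_const _))

theorem mk_mem_avgStrip_iff {φ ψ : ℝ} : (φ, ψ) ∈ avgStrip ↔ φ ∈ Ico (ψ - 1/2) (ψ + 1/2) := by
  change ψ ∈ Ioc _ _ ↔ _
  simp only [mem_Ioc, mem_Ico]
  constructor <;> rintro ⟨h₁, h₂⟩ <;> constructor <;> linarith

theorem integral_indicator_avgStrip_left (F : ℝ × ℝ → ℝ) (φ : ℝ) :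
    ∫ ψ, avgStrip.indicator F (φ, ψ) = ∫ ψ in Ioc (φ - 1/2) (φ + 1/2), F (φ, ψ) := by
  rw [← integral_indicator measurableSet_Ioc]
  rfl

theorem integral_indicator_avgStrip_right (F : ℝ × ℝ → ℝ) (ψ : ℝ) :
    ∫ φ, avgStrip.indicator F (φ, ψ) = ∫ φ in Ioc (ψ - 1/2) (ψ + 1/2), F (φ, ψ) := by
  have : (fun φ => avgStrip.indicator F (φ, ψ))
      = (Ico (ψ - 1/2) (ψ + 1/2)).indicator fun φ => F (φ, ψ) := by
    ext φ
    classical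
    simp only [indicator_apply, mk_mem_avgStrip_iff]
  rw [this, integral_indicator measurableSet_Ico, integral_Ico_eq_integral_Ioo,
    integral_Ioc_eq_integral_Ioo]

theorem integral_avg_mul_eq_of_integrable {u v : ℝ → ℝ}
    (h : Integrable (avgStrip.indicator fun p => u p.2 * v p.1) (volume.prod volume)) :
    ∫ φ, avg u φ * v φ = ∫ ψ, u ψ * avg v ψ := by
  have := integral_integral_swap
    (f := fun φ ψ => avgStrip.indicator (fun p => u p.2 * v p.1) (φ, ψ)) h
  simpa only [integral_indicator_avgStrip_left, integral_indicator_avgStrip_right,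
    integral_mul_const, integral_const_mul, ← avg_eq_setIntegral] using this

theorem integrable_indicator_avgStrip_snd {u : ℝ → ℝ} (hu : Integrable u) :
    Integrable (avgStrip.indicator fun p => u p.2) (volume.prod volume) := by
  refine (integrable_prod_iff' (hu.aestronglyMeasurable.comp_snd.indicator
    measurableSet_avgStrip)).2 ⟨ae_of_all _ fun ψ => ?_, ?_⟩
  · have : (fun φ => avgStrip.indicator (fun p => u p.2) (φ, ψ))
        = (Ico (ψ - 1/2) (ψ + 1/2)).indicator fun _ => u ψ := by
      ext φ
      classical
      simp only [indicator_apply, mk_mem_avgStrip_iff]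
    rw [this, integrable_indicator_iff measurableSet_Ico]
    exact integrableOn_const measure_Ico_lt_top.ne
  · refine hu.norm.congr (ae_of_all _ fun ψ => ?_)
    simp only [norm_indicator_eq_indicator_norm, integral_indicator_avgStrip_right,
      setIntegral_const, Real.volume_real_Ioc]
    norm_num

theorem integrable_avg {u : ℝ → ℝ} (hu : Integrable u) : Integrable (avg u) := by
  simpa only [integral_indicator_avgStrip_left, ← avg_eq_setIntegral] using
    (integrable_indicator_avgStrip_snd hu).integral_prod_left

theorem memLp_two_avg {W : ℝ → ℝ} (hW : MemLp W 2) : MemLp (avg W) 2 := by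
  have hcont := continuous_avg (hW.locallyIntegrable one_le_two)
  refine (memLp_two_iff_integrable_sq hcont.aestronglyMeasurable).2 <|
    (integrable_avg hW.integrable_sq).mono' (hcont.pow 2).aestronglyMeasurable
      (ae_of_all _ fun φ => ?_)
  rw [Real.norm_eq_abs, abs_sq]
  exact sq_avg_le_avg_sq hW φ

theorem integrable_indicator_avgStrip_mul {u v : ℝ → ℝ} (hu : MemLp u 2) (hv : MemLp v 2) :
    Integrable (avgStrip.indicator fun p => u p.2 * v p.1) (volume.prod volume) := by
  refine (integrable_prod_iff (((hu.aestronglyMeasurable.comp_snd).mul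
    hv.aestronglyMeasurable.comp_fst).indicator measurableSet_avgStrip)).2
    ⟨ae_of_all _ fun φ => ?_, ?_⟩
  · change Integrable ((Ioc (φ - 1/2) (φ + 1/2)).indicator fun ψ => u ψ * v φ)
    rw [integrable_indicator_iff measurableSet_Ioc]
    exact (((hu.locallyIntegrable one_le_two).integrableOn_isCompact isCompact_Icc).mono_set
      Ioc_subset_Icc_self).mul_const (v φ)
  · simp only [norm_indicator_eq_indicator_norm, integral_indicator_avgStrip_left, Pi.mul_apply,
      norm_mul, integral_mul_const, ← avg_eq_setIntegral]
    exact (memLp_two_avg hu.norm).integrable_mul hv.norm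

theorem integral_avg_mul_eq_integral_mul_avg {u v : ℝ → ℝ} (hu : MemLp u 2) (hv : MemLp v 2) :
    ∫ φ, avg u φ * v φ = ∫ ψ, u ψ * avg v ψ :=
  integral_avg_mul_eq_of_integrable (integrable_indicator_avgStrip_mul hu hv)

theorem memB.avg_mem_Icc {γ : ℝ} {W : ℝ → ℝ} (hW : memB γ W) (φ : ℝ) :
    avg W φ ∈ Icc (-√(2*γ)) √(2*γ) :=
  abs_le.1 ((abs_avg_le_sqrt_integral_sq hW.1 φ).trans (Real.sqrt_le_sqrt hW.2))

namespace StandingAssumptions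

variable {Φ : ℝ → ℝ} {γ : ℝ}

theorem add_Phi'_mul_sub_le (hΦ : StandingAssumptions Φ γ) (hγ : 0 < γ) {a b : ℝ}
    (ha : a ∈ Icc (-√(2*γ)) √(2*γ)) (hb : b ∈ Icc (-√(2*γ)) √(2*γ)) :
    Φ a + Phi' Φ γ a * (b - a) ≤ Φ b :=
  (convexOn_Icc_of_iteratedDerivWithin_two_nonneg (by simp [hγ]) hΦ.1
    hΦ.2.1).add_derivWithin_mul_sub_le ha hb (hΦ.1.differentiableOn (by norm_num) a ha)

theorem exists_abs_Phi'_le (hΦ : StandingAssumptions Φ γ) (hγ : 0 < γ) :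
    ∃ L, ∀ a ∈ Icc (-√(2*γ)) √(2*γ), |Phi' Φ γ a| ≤ L * |a| := by
  obtain ⟨K, hK⟩ := (hΦ.1.derivWithin (uniqueDiffOn_Icc (by simp [hγ])) (m := 1)
    (by norm_num)).exists_lipschitzOnWith one_ne_zero (convex_Icc _ _) isCompact_Icc
  refine ⟨K, fun a ha => ?_⟩
  have hKa := hK.dist_le_mul a ha 0 ⟨neg_nonpos.2 (Real.sqrt_nonneg _), Real.sqrt_nonneg _⟩
  change |Phi' Φ γ a - Phi' Φ γ 0| ≤ K * |a - 0| at hKa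
  rwa [hΦ.2.2.2.1, sub_zero, sub_zero] at hKa

theorem exists_abs_le_mul_sq (hΦ : StandingAssumptions Φ γ) (hγ : 0 < γ) :
    ∃ L, ∀ a ∈ Icc (-√(2*γ)) √(2*γ), |Φ a| ≤ L * a ^ 2 := by
  have h0 : (0 : ℝ) ∈ Icc (-√(2*γ)) √(2*γ) :=
    ⟨neg_nonpos.2 (Real.sqrt_nonneg _), Real.sqrt_nonneg _⟩
  obtain ⟨L, hL⟩ := hΦ.exists_abs_Phi'_le hγ
  refine ⟨L, fun a ha => ?_⟩
  have hnonneg : 0 ≤ Φ a := by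
    simpa [hΦ.2.2.1, hΦ.2.2.2.1] using hΦ.add_Phi'_mul_sub_le hγ h0 ha
  have hle : Φ a ≤ Phi' Φ γ a * a := by
    linarith [hΦ.add_Phi'_mul_sub_le hγ ha h0, hΦ.2.2.1]
  calc |Φ a| = Φ a := abs_of_nonneg hnonneg
    _ ≤ |Phi' Φ γ a| * |a| := hle.trans ((le_abs_self _).trans (abs_mul _ _).le)
    _ ≤ L * |a| * |a| := by gcongr; exact hL a ha
    _ = L * a ^ 2 := by rw [mul_assoc, ← sq, sq_abs]

theorem integrable_PE (hΦ : StandingAssumptions Φ γ) (hγ : 0 < γ) {W : ℝ → ℝ}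
    (hW : memB γ W) : Integrable fun φ => Φ (avg W φ) := by
  obtain ⟨L, hL⟩ := hΦ.exists_abs_le_mul_sq hγ
  exact ((memLp_two_avg hW.1).integrable_sq.const_mul L).mono'
    (hΦ.1.continuousOn.comp_continuous (continuous_avg (hW.1.locallyIntegrable one_le_two))
      hW.avg_mem_Icc).aestronglyMeasurable (ae_of_all _ fun φ => hL _ (hW.avg_mem_Icc φ))

theorem memLp_Phi'_avg (hΦ : StandingAssumptions Φ γ) (hγ : 0 < γ) {W : ℝ → ℝ}
    (hW : memB γ W) : MemLp (fun φ => Phi' Φ γ (avg W φ)) 2 := by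
  obtain ⟨L, hL⟩ := hΦ.exists_abs_Phi'_le hγ
  exact (memLp_two_avg hW.1).of_le_mul
    ((hΦ.1.continuousOn_derivWithin (uniqueDiffOn_Icc (by simp [hγ])) (by norm_num)).comp_continuous
      (continuous_avg (hW.1.locallyIntegrable one_le_two)) hW.avg_mem_Icc).aestronglyMeasurable
    (ae_of_all _ fun φ => hL _ (hW.avg_mem_Icc φ))

theorem memLp_dPE (hΦ : StandingAssumptions Φ γ) (hγ : 0 < γ) {W : ℝ → ℝ} (hW : memB γ W) :
    MemLp (dPE Φ γ W) 2 :=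
  memLp_two_avg (hΦ.memLp_Phi'_avg hγ hW)

theorem PE_add_integral_dPE_mul_sub_le (hΦ : StandingAssumptions Φ γ) (hγ : 0 < γ)
    {W V : ℝ → ℝ} (hW : memB γ W) (hV : memB γ V) :
    PE Φ W + (∫ φ, dPE Φ γ W φ * V φ) - ∫ φ, dPE Φ γ W φ * W φ ≤ PE Φ V := by
  have hg := hΦ.memLp_Phi'_avg hγ hW
  have hPW := hΦ.integrable_PE hγ hW
  have hgV : Integrable fun φ => Phi' Φ γ (avg W φ) * avg V φ :=
    hg.integrable_mul (memLp_two_avg hV.1)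
  have hgW : Integrable fun φ => Phi' Φ γ (avg W φ) * avg W φ :=
    hg.integrable_mul (memLp_two_avg hW.1)
  have hsum : Integrable fun φ => Φ (avg W φ) + Phi' Φ γ (avg W φ) * avg V φ := hPW.add hgV
  rw [dPE, integral_avg_mul_eq_integral_mul_avg hg hV.1,
    integral_avg_mul_eq_integral_mul_avg hg hW.1, PE, PE, ← integral_add hPW hgV,
    ← integral_sub hsum hgW]
  refine integral_mono (hsum.sub hgW) (hΦ.integrable_PE hγ hV) fun φ => ?_
  linarith [hΦ.add_Phi'_mul_sub_le hγ (hW.avg_mem_Icc φ) (hV.avg_mem_Icc φ)]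

theorem PE_le_integral_dPE_mul (hΦ : StandingAssumptions Φ γ) (hγ : 0 < γ) {W : ℝ → ℝ}
    (hW : memB γ W) : PE Φ W ≤ ∫ φ, dPE Φ γ W φ * W φ := by
  have h0 : memB γ 0 := ⟨MemLp.zero, by simp [hγ.le]⟩
  have hPE0 : PE Φ 0 = 0 := by simp [PE, avg, hΦ.2.2.1]
  simpa [hPE0] using hΦ.PE_add_integral_dPE_mul_sub_le hγ hW h0

end StandingAssumptions

/-- if `S` is a cone invariant under `∂P` and `W*` maximises `P` over
`S ∩ B_γ` with `P(W*) > 0`, then `(1/2)‖W*‖₂² = γ` and `W*` is a travelling wave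
with `σ² = ‖∂P(W*)‖₂/√(2γ) > 0`. -/
theorem statement10 (γ : ℝ) (hγ : 0 < γ) (Φ : ℝ → ℝ) (hΦ : StandingAssumptions Φ γ)
    (S : Set (ℝ → ℝ))
    (hcone : ∀ W ∈ S, ∀ c : ℝ, 0 ≤ c → (fun φ => c * W φ) ∈ S)
    (hinv : ∀ W ∈ S, dPE Φ γ W ∈ S)
    (Wstar : ℝ → ℝ) (hWS : Wstar ∈ S) (hWB : memB γ Wstar)
    (hmax : ∀ W ∈ S, memB γ W → PE Φ W ≤ PE Φ Wstar)
    (hpos : 0 < PE Φ Wstar) :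
    (1/2) * (∫ φ : ℝ, (Wstar φ)^2) = γ ∧
    0 < Real.sqrt (∫ ψ : ℝ, (dPE Φ γ Wstar ψ)^2) / Real.sqrt (2*γ) ∧
    (∀ᵐ φ ∂(volume : Measure ℝ),
      (Real.sqrt (∫ ψ : ℝ, (dPE Φ γ Wstar ψ)^2) / Real.sqrt (2*γ)) * Wstar φ
        = dPE Φ γ Wstar φ) := by
  set D := dPE Φ γ Wstar
  set N := √(∫ ψ, D ψ ^ 2)
  have hD : MemLp D 2 := hΦ.memLp_dPE hγ hWB
  set V := fun φ => √(2*γ) / N * D φ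
  have hVB : memB γ V := ⟨hD.const_mul _,
    (integral_sq_div_sqrt_integral_sq_mul_le D _).trans (Real.sq_sqrt (by linarith)).le⟩
  have hDV : ∫ φ, D φ * V φ = √(2*γ) * N := integral_mul_div_sqrt_integral_sq_mul D _
  have htest : √(2*γ) * N ≤ ∫ φ, D φ * Wstar φ := by
    linarith [hΦ.PE_add_integral_dPE_mul_sub_le hγ hWB hVB,
      hmax V (hcone _ (hinv _ hWS) _ (by positivity)) hVB]
  obtain ⟨hnorm, hNpos, hae⟩ := ae_mul_eq_of_mul_sqrt_le_integral_mul hD hWB.1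
    (Real.sqrt_le_sqrt hWB.2) (hpos.trans_le (hΦ.PE_le_integral_dPE_mul hγ hWB)) htest
  refine ⟨?_, div_pos hNpos (Real.sqrt_pos.2 (by linarith)), ?_⟩
  · linarith [(Real.sqrt_inj (integral_nonneg fun _ => sq_nonneg _) (by linarith)).1 hnorm]
  · filter_upwards [hae] with φ hφ
    field_simp
    linarith
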